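/- Consider the planar polar system ρ̇ = ρ²·(cos φ − ρ⁻²ε²·cos φ + ρ·cos(2φ)·F₀), φ̇ = ρ·sin φ·(1 + ρ⁻²ε² + 2ρ·F₀·cos φ) on the region ρ ∈ [ξ⁻¹ε, δ], |φ| ≤ π/2 + χ/2. Then for ξ, δ > 0 sufficiently small (depending on F₀, χ) and all 0 < ε ≤ ξδ: (i) φ̇ > 0 whenever φ ∈ (0, π/2 + χ/2] and φ̇ < 0 whenever φ ∈ [−π/2 − χ/2, 0); (ii) if additionally |φ| ≤ π/4 then ρ̇ > (1/2)·ρ²·(1 − ρ⁻²ε²). -/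
import Mathlib


open Real

set_option maxHeartbeats 1000000 in
/-- Sign conditions for the polar vector field
ρ̇ = ρ²(cos φ − ρ⁻²ε² cos φ + ρ cos(2φ) F₀), φ̇ = ρ sin φ (1 + ρ⁻²ε² + 2ρF₀ cos φ)
on the region ρ ∈ [ξ⁻¹ε, δ], |φ| ≤ π/2 + χ/2: for ξ, δ sufficiently small and
0 < ε ≤ ξδ, (i) φ̇ has the sign of φ, and (ii) if |φ| ≤ π/4 then
ρ̇ > (1/2)ρ²(1 − ρ⁻²ε²). -/
theorem polar_sign_conditions (F₀ χ : ℝ) (hχ0 : 0 < χ) (hχπ : χ < Real.pi) :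
    ∃ ξ > (0:ℝ), ∃ δ > (0:ℝ), ∀ ε : ℝ, 0 < ε → ε ≤ ξ * δ →
      ∀ ρ φ : ℝ, ξ⁻¹ * ε ≤ ρ → ρ ≤ δ → |φ| ≤ Real.pi / 2 + χ / 2 →
        ((0 < φ → 0 < ρ * Real.sin φ * (1 + ρ⁻¹ ^ 2 * ε ^ 2 + 2 * ρ * F₀ * Real.cos φ)) ∧
         (φ < 0 → ρ * Real.sin φ * (1 + ρ⁻¹ ^ 2 * ε ^ 2 + 2 * ρ * F₀ * Real.cos φ) < 0) ∧
         (|φ| ≤ Real.pi / 4 →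
            (1 / 2) * ρ ^ 2 * (1 - ρ⁻¹ ^ 2 * ε ^ 2) <
              ρ ^ 2 * (Real.cos φ - ρ⁻¹ ^ 2 * ε ^ 2 * Real.cos φ
                + ρ * Real.cos (2 * φ) * F₀))) := by
  refine ⟨1/2, by norm_num, 1/(20*(|F₀|+1)), by positivity, ?_⟩
  intro ε hε hεξδ ρ φ hρlo hρhi hφ
  have hF0 : (0:ℝ) ≤ |F₀| := abs_nonneg _
  have h2ε : 2 * ε ≤ ρ := by norm_num at hρlo; linarith
  have hρ : 0 < ρ := by linarith
  have hu0 : 0 ≤ ρ⁻¹ ^ 2 * ε ^ 2 := by positivity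
  have hu : ρ⁻¹ ^ 2 * ε ^ 2 ≤ 1/4 := by
    rw [inv_pow, inv_mul_le_iff₀ (by positivity)]
    nlinarith
  have hρF : ρ * |F₀| ≤ 1/20 := by
    rw [le_div_iff₀ (by positivity)] at hρhi
    nlinarith
  have hc1 : |Real.cos φ| ≤ 1 := Real.abs_cos_le_one φ
  have habs : |2 * ρ * F₀ * Real.cos φ| ≤ 1/10 := by
    rw [abs_mul, abs_mul, abs_mul]
    rw [abs_two, abs_of_pos hρ]
    calc 2 * ρ * |F₀| * |Real.cos φ| ≤ 2 * ρ * |F₀| * 1 := by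
          apply mul_le_mul_of_nonneg_left hc1 (by positivity)
      _ ≤ 1/10 := by nlinarith
  obtain ⟨habs1, habs2⟩ := abs_le.mp habs
  have hB : 0 < 1 + ρ⁻¹ ^ 2 * ε ^ 2 + 2 * ρ * F₀ * Real.cos φ := by linarith
  have hφπ : |φ| < Real.pi := lt_of_le_of_lt hφ (by linarith [Real.pi_pos])
  refine ⟨?_, ?_, ?_⟩
  · intro hφ0
    have hs : 0 < Real.sin φ :=
      Real.sin_pos_of_pos_of_lt_pi hφ0 (lt_of_le_of_lt (le_abs_self φ) hφπ)
    exact mul_pos (mul_pos hρ hs) hB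
  · intro hφ0
    have hs : Real.sin φ < 0 := by
      have h := Real.sin_pos_of_pos_of_lt_pi (show 0 < -φ by linarith)
        (lt_of_le_of_lt (neg_le_abs φ) hφπ)
      rw [Real.sin_neg] at h; linarith
    exact mul_neg_of_neg_of_pos (mul_neg_of_pos_of_neg hρ hs) hB
  · intro hφ4
    have hcos : Real.sqrt 2 / 2 ≤ Real.cos φ := by
      rw [← Real.cos_pi_div_four, ← Real.cos_abs φ]
      exact Real.cos_le_cos_of_nonneg_of_le_pi (abs_nonneg φ)
        (by linarith [Real.pi_gt_three]) hφ4
    have hsqrt : (14/10:ℝ) ≤ Real.sqrt 2 := by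
      nlinarith [Real.sq_sqrt (by norm_num : (0:ℝ) ≤ 2), Real.sqrt_nonneg 2]
    have hcos7 : (7/10:ℝ) ≤ Real.cos φ := by linarith
    have hc2 : |Real.cos (2*φ)| ≤ 1 := Real.abs_cos_le_one _
    have ht : -(1/20) ≤ ρ * Real.cos (2*φ) * F₀ := by
      have h1 : |ρ * Real.cos (2*φ) * F₀| ≤ 1/20 := by
        rw [abs_mul, abs_mul, abs_of_nonneg hρ.le]
        calc ρ * |Real.cos (2*φ)| * |F₀| ≤ ρ * 1 * |F₀| := by
              apply mul_le_mul_of_nonneg_right _ hF0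
              nlinarith
          _ ≤ 1/20 := by nlinarith
      linarith [(abs_le.mp h1).1]
    have h1 : (3/4 : ℝ) * (Real.cos φ - 1/2) ≤ (1 - ρ⁻¹ ^ 2 * ε ^ 2) * (Real.cos φ - 1/2) :=
      mul_le_mul_of_nonneg_right (by linarith) (by linarith)
    have hm : (3/20 : ℝ) ≤ (1 - ρ⁻¹ ^ 2 * ε ^ 2) * (Real.cos φ - 1/2) := by
      nlinarith [h1]
    have hS : 0 < Real.cos φ - ρ⁻¹ ^ 2 * ε ^ 2 * Real.cos φ
        + ρ * Real.cos (2 * φ) * F₀ - (1/2) * (1 - ρ⁻¹ ^ 2 * ε ^ 2) := by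
      nlinarith [hm, ht]
    nlinarith [mul_pos (pow_pos hρ 2) hS]
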